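/- arXiv:2605.09588 — 3 statements merged into one kernel-verified Lean document; each statement's English description precedes it below -/
import Mathlib

section
/- Let f : 2^C → [0,1] be a normalized monotone submodular function on subsets of a finite set C, let k ≥ 1, and let OPT_k = max over S with |S| = k of f(S). Suppose a sequence ∅ = S_0 ⊆ S_1 ⊆ ... ⊆ S_k of committees is built by adding one element at a time such that at each step i, f(S_{i+1}) − f(S_i) ≥ max_{c ∉ S_i} (f(S_i ∪ {c}) − f(S_i)) − ε/k for some ε ≥ 0. Then f(S_k) ≥ (1 − 1/e)·OPT_k − ε. -/
lemma submod_sum {C : Type*} [DecidableEq C] (f : Finset C → ℝ)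
    (hsub : ∀ (S R : Finset C) (x : C), S ⊆ R → x ∉ R →
      f (insert x R) - f R ≤ f (insert x S) - f S)
    (S : Finset C) : ∀ T : Finset C, Disjoint S T →
      f (S ∪ T) - f S ≤ ∑ c ∈ T, (f (insert c S) - f S) := by
  intro T
  induction T using Finset.induction_on with
  | empty => simp
  | @insert a T' ha ih =>
    intro hdisj
    have hdisj' : Disjoint S T' := hdisj.mono_right (Finset.subset_insert _ _)
    have haS : a ∉ S := fun h => (Finset.disjoint_left.mp hdisj) h (Finset.mem_insert_self a T')
    have haST : a ∉ S ∪ T' := by simp [haS, ha]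
    have h1 : f (insert a (S ∪ T')) - f (S ∪ T') ≤ f (insert a S) - f S :=
      hsub S (S ∪ T') a (Finset.subset_union_left) haST
    have h2 := ih hdisj'
    rw [Finset.sum_insert ha, Finset.union_insert]
    linarith

/-- Approximate greedy for monotone submodular maximization: if
`f : 2^C → [0,1]` is normalized, monotone and submodular, `OPT_k` is the
maximum of `f` over size-`k` sets, and `∅ = S_0 ⊆ S_1 ⊆ ⋯ ⊆ S_k` is built by
inserting one element at a time with per-step marginal gain within `ε/k` of
the best available, then `f(S_k) ≥ (1 − 1/e)·OPT_k − ε`. -/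
theorem stmt3 {C : Type*} [DecidableEq C]
    (f : Finset C → ℝ)
    (hnorm : f ∅ = 0)
    (hrange : ∀ S, 0 ≤ f S ∧ f S ≤ 1)
    (hmono : ∀ S T : Finset C, S ⊆ T → f S ≤ f T)
    (hsub : ∀ (S R : Finset C) (x : C), S ⊆ R → x ∉ R →
      f (insert x R) - f R ≤ f (insert x S) - f S)
    (k : ℕ) (hk : 1 ≤ k)
    (Sstar : Finset C) (hstar : Sstar.card = k)
    (hopt : ∀ T : Finset C, T.card = k → f T ≤ f Sstar)
    (ε : ℝ) (hε : 0 ≤ ε)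
    (Sseq : ℕ → Finset C) (h0 : Sseq 0 = ∅)
    (hbuild : ∀ i < k, ∃ c ∉ Sseq i, Sseq (i + 1) = insert c (Sseq i))
    (hgreedy : ∀ i < k, ∀ c ∉ Sseq i,
      f (insert c (Sseq i)) - f (Sseq i) - ε / k ≤ f (Sseq (i + 1)) - f (Sseq i)) :
    (1 - (Real.exp 1)⁻¹) * f Sstar - ε ≤ f (Sseq k) := by
  have hk0 : (0:ℝ) < k := by exact_mod_cast hk
  have hfstar0 : 0 ≤ f Sstar := (hrange Sstar).1
  -- per-step recursion
  have hstep : ∀ i < k, f Sstar - f (Sseq (i+1)) ≤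
      (1 - 1/(k:ℝ)) * (f Sstar - f (Sseq i)) + ε / k := by
    intro i hi
    set S := Sseq i with hS
    -- key: ∃ c ∉ S, (f Sstar - f S)/k ≤ f (insert c S) - f S
    have hkey : ∃ c ∉ S, (f Sstar - f S) / k ≤ f (insert c S) - f S := by
      by_cases hsub' : Sstar \ S = ∅
      · obtain ⟨c, hc, _⟩ := hbuild i hi
        refine ⟨c, hc, ?_⟩
        have h1 : Sstar ⊆ S := by
          intro x hx
          by_contra hxS
          exact (Finset.eq_empty_iff_forall_notMem.mp hsub' x) (Finset.mem_sdiff.mpr ⟨hx, hxS⟩)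
        have h2 : f Sstar ≤ f S := hmono _ _ h1
        have h3 : f S ≤ f (insert c S) := hmono _ _ (Finset.subset_insert _ _)
        have : (f Sstar - f S) / k ≤ 0 := by
          apply div_nonpos_of_nonpos_of_nonneg <;> linarith
        linarith
      · have hne : (Sstar \ S).Nonempty := Finset.nonempty_iff_ne_empty.mpr hsub'
        obtain ⟨c, hcmem, hcmax⟩ := Finset.exists_max_image (Sstar \ S)
          (fun c => f (insert c S) - f S) hne
        have hcS : c ∉ S := (Finset.mem_sdiff.mp hcmem).2
        refine ⟨c, hcS, ?_⟩
        have hdisj : Disjoint S (Sstar \ S) := Finset.disjoint_sdiff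
        have hsum := submod_sum f hsub S (Sstar \ S) hdisj
        have hsumle : ∑ x ∈ Sstar \ S, (f (insert x S) - f S) ≤
            (Sstar \ S).card * (f (insert c S) - f S) := by
          calc ∑ x ∈ Sstar \ S, (f (insert x S) - f S)
              ≤ ∑ _x ∈ Sstar \ S, (f (insert c S) - f S) :=
                Finset.sum_le_sum (fun x hx => hcmax x hx)
            _ = (Sstar \ S).card * (f (insert c S) - f S) := by
                rw [Finset.sum_const, nsmul_eq_mul]
        have hmarg0 : 0 ≤ f (insert c S) - f S := by
          have := hmono S (insert c S) (Finset.subset_insert _ _); linarith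
        have hcard : ((Sstar \ S).card : ℝ) ≤ k := by
          have : (Sstar \ S).card ≤ Sstar.card := Finset.card_le_card (Finset.sdiff_subset)
          exact_mod_cast hstar ▸ this
        have hmonoU : f Sstar ≤ f (S ∪ (Sstar \ S)) := by
          apply hmono; intro x hx
          by_cases h : x ∈ S
          · exact Finset.mem_union_left _ h
          · exact Finset.mem_union_right _ (Finset.mem_sdiff.mpr ⟨hx, h⟩)
        have : f Sstar - f S ≤ (k:ℝ) * (f (insert c S) - f S) := by
          calc f Sstar - f S ≤ f (S ∪ (Sstar \ S)) - f S := by linarith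
            _ ≤ ∑ x ∈ Sstar \ S, (f (insert x S) - f S) := hsum
            _ ≤ (Sstar \ S).card * (f (insert c S) - f S) := hsumle
            _ ≤ (k:ℝ) * (f (insert c S) - f S) := by
                exact mul_le_mul_of_nonneg_right hcard hmarg0
        rw [div_le_iff₀ hk0]; linarith
    obtain ⟨c, hcS, hcge⟩ := hkey
    have hg := hgreedy i hi c hcS
    have : (f Sstar - f S) / k - ε / k ≤ f (Sseq (i+1)) - f S := by linarith
    have hexp : (1 - 1/(k:ℝ)) * (f Sstar - f S) + ε / k
        = (f Sstar - f S) - ((f Sstar - f S)/k - ε/k) := by field_simp; ring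
    rw [hexp]; linarith
  -- induction bound
  have hbound : ∀ i ≤ k, f Sstar - f (Sseq i) ≤
      (1 - 1/(k:ℝ))^i * f Sstar + ε * i / k := by
    intro i
    induction i with
    | zero => intro _; simp [h0, hnorm]
    | succ n ih =>
      intro hn
      have hnk : n < k := hn
      have ihn := ih (le_of_lt hnk)
      have hstepn := hstep n hnk
      have hnn : (0:ℝ) ≤ 1 - 1/(k:ℝ) := by
        have : 1/(k:ℝ) ≤ 1 := by
          rw [div_le_one hk0]; exact_mod_cast hk
        linarith
      have h1 : (1 - 1/(k:ℝ)) * (f Sstar - f (Sseq n)) ≤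
          (1 - 1/(k:ℝ)) * ((1 - 1/(k:ℝ))^n * f Sstar + ε * n / k) :=
        mul_le_mul_of_nonneg_left ihn hnn
      have h1le : (1 - 1/(k:ℝ)) ≤ 1 := by
        have : 0 ≤ 1/(k:ℝ) := by positivity
        linarith
      have hεn : (0:ℝ) ≤ ε * n / k := by positivity
      have h2 : (1 - 1/(k:ℝ)) * (ε * n / k) ≤ ε * n / k :=
        mul_le_of_le_one_left hεn h1le
      have : f Sstar - f (Sseq (n+1)) ≤
          (1 - 1/(k:ℝ))^(n+1) * f Sstar + ε * n / k + ε / k := by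
        rw [pow_succ]
        nlinarith
      have heq : (1 - 1/(k:ℝ))^(n+1) * f Sstar + ε * n / k + ε / k
          = (1 - 1/(k:ℝ))^(n+1) * f Sstar + ε * ((n:ℝ)+1) / k := by ring
      rw [heq] at this
      push_cast
      linarith
  have hfinal := hbound k le_rfl
  -- (1 - 1/k)^k ≤ exp(-1) = (exp 1)⁻¹
  have hexp : (1 - 1/(k:ℝ))^k ≤ (Real.exp 1)⁻¹ := by
    have h1 : 1 - 1/(k:ℝ) ≤ Real.exp (-(1/k)) := by
      have := Real.add_one_le_exp (-(1/(k:ℝ)))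
      linarith
    have hnn : (0:ℝ) ≤ 1 - 1/(k:ℝ) := by
      have : 1/(k:ℝ) ≤ 1 := by rw [div_le_one hk0]; exact_mod_cast hk
      linarith
    calc (1 - 1/(k:ℝ))^k ≤ (Real.exp (-(1/k)))^k := pow_le_pow_left₀ hnn h1 k
      _ = Real.exp (-(1/k) * k) := by rw [← Real.exp_nat_mul]; ring_nf
      _ = (Real.exp 1)⁻¹ := by
          rw [← Real.exp_neg]; congr 1; field_simp
  have hεk : ε * (k:ℝ) / k = ε := by field_simp
  have h3 : (1 - 1/(k:ℝ))^k * f Sstar ≤ (Real.exp 1)⁻¹ * f Sstar :=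
    mul_le_mul_of_nonneg_right hexp hfstar0
  rw [hεk] at hfinal
  linarith
end

section
/- The function θ is not submodular: there exist a 4-element candidate set C = {a,b,c,d} and a distribution P over rankings of C (namely probability 2/3 on b ≻ a ≻ d ≻ c and probability 1/3 on c ≻ a ≻ d ≻ b) such that θ({a}) = θ({a,c}) = 1/3, θ({a,b}) = 2/3, and θ({a,b,c}) = 1; hence adding c to {a} yields marginal gain 0 while adding c to the superset {a,b} yields marginal gain 1/3, violating diminishing returns. -/
open Finset

noncomputable section

/-- The two-ranking profile on `C = {a,b,c,d} = {0,1,2,3}`: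
probability `2/3` on `b ≻ a ≻ d ≻ c` and `1/3` on `c ≻ a ≻ d ≻ b`. -/
def P8 : Fin 2 → ℝ := ![2 / 3, 1 / 3]

/-- Ranks (position, 1 = best) of `a,b,c,d` under the two rankings. -/
def rank8 : Fin 2 → Fin 4 → ℕ := ![![2, 1, 4, 3], ![2, 4, 1, 3]]

/-- Probability of an event over the two rankings. -/
def pr8 (p : Fin 2 → Prop) [DecidablePred p] : ℝ :=
  ∑ ω, if p ω then P8 ω else 0

/-- Rank of the best member of a committee (with default `5` for `∅`). -/
def rk8 (ω : Fin 2) (T : Finset (Fin 4)) : ℕ :=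
  if h : T.Nonempty then T.inf' h (rank8 ω) else 5

/-- `θ(S) = min_{x ∈ C∖S} Pr_π[r_π(S) < rank_π(x)]` for a proper committee. -/
def θ8 (S : Finset (Fin 4)) (h : (Finset.univ \ S).Nonempty) : ℝ :=
  (Finset.univ \ S).inf' h fun x => pr8 fun ω => rk8 ω S < rank8 ω x

end

/-- θ is not submodular: on the 4-candidate profile above (with
`a = 0, b = 1, c = 2, d = 3`), `θ({a}) = θ({a,c}) = 1/3`, `θ({a,b}) = 2/3`,
and `θ({a,b,c}) = 1`; hence adding `c` to `{a}` gives marginal gain `0`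
while adding `c` to the superset `{a,b}` gives marginal gain `1/3`,
violating diminishing returns. -/
theorem stmt8 :
    θ8 {0} (by decide) = 1 / 3 ∧
    θ8 {0, 2} (by decide) = 1 / 3 ∧
    θ8 {0, 1} (by decide) = 2 / 3 ∧
    θ8 {0, 1, 2} (by decide) = 1 ∧
    θ8 {0, 2} (by decide) - θ8 {0} (by decide)
      < θ8 {0, 1, 2} (by decide) - θ8 {0, 1} (by decide) := by
  have h1 : θ8 {0} (by decide) = 1 / 3 := by
    simp only [θ8, pr8, rk8, P8, rank8, Fin.sum_univ_two]
    norm_num [show (univ \ ({0} : Finset (Fin 4))) = {1,2,3} by decide,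
      Finset.inf'_insert, Finset.inf'_singleton, Matrix.cons_val_two, Matrix.cons_val_three]
  have h2 : θ8 {0, 2} (by decide) = 1 / 3 := by
    simp only [θ8, pr8, rk8, P8, rank8, Fin.sum_univ_two]
    norm_num [show (univ \ ({0,2} : Finset (Fin 4))) = {1,3} by decide,
      Finset.inf'_insert, Finset.inf'_singleton, Matrix.cons_val_two, Matrix.cons_val_three]
  have h3 : θ8 {0, 1} (by decide) = 2 / 3 := by
    simp only [θ8, pr8, rk8, P8, rank8, Fin.sum_univ_two]
    norm_num [show (univ \ ({0,1} : Finset (Fin 4))) = {2,3} by decide,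
      Finset.inf'_insert, Finset.inf'_singleton, Matrix.cons_val_two, Matrix.cons_val_three]
  have h4 : θ8 {0, 1, 2} (by decide) = 1 := by
    simp only [θ8, pr8, rk8, P8, rank8, Fin.sum_univ_two]
    norm_num [show (univ \ ({0,1,2} : Finset (Fin 4))) = {3} by decide,
      Finset.inf'_insert, Finset.inf'_singleton, Matrix.cons_val_two, Matrix.cons_val_three]
  refine ⟨h1, h2, h3, h4, ?_⟩
  rw [h1, h2, h3, h4]; norm_num
end

section
/- Let P be a distribution over strict rankings of a finite set C, let S ⊊ C be nonempty and proper with θ(S) := min over x ∈ C∖S of WIN(S,{x}), and suppose S is ϑ-winning. In the cyclic-profile construction with N > 2k and shift committee T = S − 1 disjoint from S, one has WIN(S,T) ≤ k/N, and combined with Lemma 'θ lifts to committees' this implies ϑ ≤ 1 − (1 − k/N)/k, i.e., the best candidate-wise guarantee on the uniform cyclic profile over Z_N with |S| = k satisfies θ(S) ≤ 1 − (N−k)/(kN). -/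
open scoped Classical ENat

lemma zmod_val_sub_one {N : ℕ} [NeZero N] (a : ZMod N) (h : a ≠ 0) :
    (a - 1).val = a.val - 1 := by
  have h1 : 1 ≤ a.val := Nat.one_le_iff_ne_zero.mpr (by simpa [ZMod.val_eq_zero] using h)
  have h2 : a.val < N := ZMod.val_lt a
  have : a - 1 = ((a.val - 1 : ℕ) : ZMod N) := by
    push_cast [Nat.cast_sub h1]
    simp [ZMod.natCast_val, ZMod.cast_id]
  rw [this, ZMod.val_cast_of_lt (by omega)]

/-- On the uniform cyclic profile over `ℤ_N` (`N > 2k`, rankings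
`π_i : i ≻ i+1 ≻ ⋯ ≻ i−1`, the rank of `c` under `π_i` being `(c−i).val`),
for any committee `S` of size `k ≥ 1` and its shift `T = S − 1`:
`WIN(S,T) ≤ k/N`; combined with the lemma that a `ϑ`-winning committee
satisfies `Pr[r_π(S) ≤ r_π(S')] ≥ 1 − |S'|(1−ϑ)`, any `ϑ` for which `S` is
`ϑ`-winning satisfies `ϑ ≤ 1 − (1 − k/N)/k`; i.e. the best candidate-wise
guarantee satisfies `θ(S) ≤ 1 − (N−k)/(kN)` (stated as the existence of an
outside rival witnessing the bound). -/
theorem stmt17 (N k : ℕ) [NeZero N] (hNk : 2 * k < N) (hk : 0 < k)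
    (S : Finset (ZMod N)) (hS : S.card = k) (ϑ : ℝ) :
    let rk : ZMod N → Finset (ZMod N) → ℕ∞ :=
      fun i A => A.inf fun c => ((c - i).val : ℕ∞)
    let T : Finset (ZMod N) := S.image fun s => s - 1
    let pr : (ZMod N → Prop) → ℝ :=
      fun p => ((Finset.univ.filter fun i : ZMod N => p i).card : ℝ) / N
    (pr (fun i => rk i S < rk i T) + (1 / 2) * pr (fun i => rk i S = rk i T)
        ≤ (k : ℝ) / N) ∧
    ((∀ x ∉ S, ϑ ≤ pr fun i => rk i S < (((x - i).val : ℕ∞)))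
        → ϑ ≤ 1 - (1 - (k : ℝ) / N) / k) ∧
    (∃ x ∉ S, pr (fun i => rk i S < (((x - i).val : ℕ∞)))
        ≤ 1 - ((N : ℝ) - k) / (k * N)) := by
  intro rk T pr
  -- a filter operator elaborated exactly like the one inside `pr`
  let F : (ZMod N → Prop) → Finset (ZMod N) := fun p => Finset.univ.filter fun i : ZMod N => p i
  have hmemF : ∀ (p : ZMod N → Prop) (i : ZMod N), i ∈ F p ↔ p i := by
    intro p i; simp [F]
  have hNpos : 0 < N := Nat.pos_of_ne_zero (NeZero.ne N)
  have hN0 : (0:ℝ) < N := by exact_mod_cast hNpos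
  have hk0 : (0:ℝ) < k := by exact_mod_cast hk
  have hSne : S.Nonempty := Finset.card_pos.mp (by omega)
  -- the gap length
  set m : ℕ := (N - 1) / k with hm
  have hdm : k * m + (N - 1) % k = N - 1 := by rw [hm]; exact Nat.div_add_mod (N - 1) k
  have hmod : (N - 1) % k < k := Nat.mod_lt _ hk
  have hkm1 : k * m ≤ N - 1 := by omega
  have hkm2 : N ≤ k * m + k := by omega
  have hm1 : 1 ≤ m := by
    rw [hm, Nat.one_le_div_iff hk]; omega
  have hmN : m < N := by
    have := Nat.le_mul_of_pos_left m hk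
    omega
  -- pigeonhole: a run of m consecutive non-S elements
  have hrun : ∃ x : ZMod N, ∀ j : ℕ, j < m → x - (j : ZMod N) ∉ S := by
    by_contra hc
    push_neg at hc
    choose j hjm hjS using hc
    have hcard : (Finset.univ : Finset (ZMod N)).card ≤ (S ×ˢ Finset.range m).card := by
      apply Finset.card_le_card_of_injOn (fun x => (x - (j x : ZMod N), j x))
      · intro x _
        simp only [Finset.mem_coe, Finset.mem_product, Finset.mem_range]
        exact ⟨hjS x, hjm x⟩
      · intro a _ b _ hab
        simp only [Prod.mk.injEq] at hab
        have h2 : j a = j b := hab.2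
        have h1 := hab.1
        rw [h2] at h1
        exact sub_left_inj.mp h1
    rw [Finset.card_univ, ZMod.card, Finset.card_product, hS, Finset.card_range] at hcard
    have := Nat.mul_le_mul_left 1 hkm1
    omega
  obtain ⟨x, hx⟩ := hrun
  have hxS : x ∉ S := by simpa using hx 0 hm1
  -- main counting bound for x
  have h3 : ((F (fun i => rk i S < (((x - i).val : ℕ∞)))).card : ℝ) / N
      ≤ 1 - ((N : ℝ) - k) / (k * N) := by
    have hnot : ∀ j : ℕ, j < m → ¬ (rk (x - (j : ZMod N)) S
        < (((x - (x - (j : ZMod N))).val : ℕ∞))) := by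
      intro j hjm
      simp only [not_lt]
      have hxi : x - (x - (j : ZMod N)) = (j : ZMod N) := by ring
      rw [hxi, ZMod.val_cast_of_lt (by omega)]
      apply Finset.le_inf
      intro c hc
      have hj : j ≤ (c - (x - (j : ZMod N))).val := by
        by_contra hlt
        push_neg at hlt
        set d := (c - (x - (j : ZMod N))).val with hd
        have hcd : c = x - ((j - d : ℕ) : ZMod N) := by
          have h1 : c - (x - (j : ZMod N)) = (d : ZMod N) := by
            rw [hd]; simp [ZMod.natCast_val, ZMod.cast_id]
          have h2 : ((j - d : ℕ) : ZMod N) = (j : ZMod N) - (d : ZMod N) := by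
            push_cast [Nat.cast_sub (le_of_lt hlt)]; ring
          rw [h2]
          have h4 := sub_eq_iff_eq_add.mp h1
          rw [h4]; ring
        have h5 := hx (j - d) (by omega)
        rw [← hcd] at h5
        exact h5 hc
      exact_mod_cast hj
    have himg : ((Finset.range m).image (fun j : ℕ => x - (j : ZMod N))).card = m := by
      rw [Finset.card_image_of_injOn, Finset.card_range]
      intro a ha b hb hab
      simp only [Finset.mem_coe, Finset.mem_range] at ha hb
      have h1 : (a : ZMod N) = (b : ZMod N) := sub_right_inj.mp hab
      have h2 := congrArg ZMod.val h1
      rwa [ZMod.val_cast_of_lt (by omega), ZMod.val_cast_of_lt (by omega)] at h2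
    have hdisj : Disjoint (F (fun i => rk i S < (((x - i).val : ℕ∞))))
        ((Finset.range m).image (fun j : ℕ => x - (j : ZMod N))) := by
      rw [Finset.disjoint_right]
      intro i hi
      simp only [Finset.mem_image, Finset.mem_range] at hi
      obtain ⟨j, hjm, rfl⟩ := hi
      rw [hmemF]
      exact hnot j hjm
    have hle : (F (fun i => rk i S < (((x - i).val : ℕ∞)))).card ≤ N - m := by
      have h1 := Finset.card_le_card (Finset.subset_univ
        ((F (fun i => rk i S < (((x - i).val : ℕ∞)))) ∪
          (Finset.range m).image (fun j : ℕ => x - (j : ZMod N))))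
      rw [Finset.card_union_of_disjoint hdisj, Finset.card_univ, ZMod.card, himg] at h1
      omega
    have hcast : ((F (fun i => rk i S < (((x - i).val : ℕ∞)))).card : ℝ) ≤ (N : ℝ) - m := by
      have h1 := (Nat.cast_le (α := ℝ)).mpr hle
      rwa [Nat.cast_sub (le_of_lt hmN)] at h1
    have hp : ((F (fun i => rk i S < (((x - i).val : ℕ∞)))).card : ℝ) / N
        ≤ ((N : ℝ) - m) / N := by gcongr
    refine hp.trans ?_
    rw [← sub_nonneg]
    have heq : 1 - ((N:ℝ) - k)/(k*N) - ((N:ℝ) - m)/N = ((k:ℝ)*m - N + k)/(k*N) := by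
      field_simp; ring
    rw [heq]
    apply div_nonneg
    · have : (N : ℝ) ≤ (k : ℝ) * m + k := by exact_mod_cast hkm2
      linarith
    · positivity
  have h3' : pr (fun i => rk i S < (((x - i).val : ℕ∞))) ≤ 1 - ((N : ℝ) - k) / (k * N) := h3
  refine ⟨?_, ?_, ⟨x, hxS, h3'⟩⟩
  · -- part 1
    have hkey : ∀ i : ZMod N, i ∉ S → rk i T < rk i S := by
      intro i hi
      obtain ⟨c0, hc0S, hc0⟩ := Finset.exists_mem_eq_inf S hSne
        (fun c => ((c - i).val : ℕ∞))
      have hne : c0 - i ≠ 0 := by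
        intro h
        have h1 : c0 = i := sub_eq_zero.mp h
        rw [h1] at hc0S; exact hi hc0S
      have hv1 : 1 ≤ (c0 - i).val := Nat.one_le_iff_ne_zero.mpr
        (by simpa [ZMod.val_eq_zero] using hne)
      have hT : c0 - 1 ∈ T := Finset.mem_image_of_mem _ hc0S
      have hle : rk i T ≤ ((c0 - 1 - i).val : ℕ∞) := Finset.inf_le hT
      have hvv : (c0 - 1 - i).val = (c0 - i).val - 1 := by
        have h5 : c0 - 1 - i = (c0 - i) - 1 := by ring
        rw [h5, zmod_val_sub_one _ hne]
      calc rk i T ≤ ((c0 - 1 - i).val : ℕ∞) := hle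
        _ < ((c0 - i).val : ℕ∞) := by
            rw [hvv]
            exact_mod_cast Nat.sub_lt (by omega) one_pos
        _ = rk i S := hc0.symm
    have hsub1 : F (fun i => rk i S < rk i T) ∪ F (fun i => rk i S = rk i T) ⊆ S := by
      intro i hi
      rw [Finset.mem_union, hmemF, hmemF] at hi
      by_contra hiS
      have hki := hkey i hiS
      rcases hi with h | h
      · exact absurd (h.trans hki) (lt_irrefl _)
      · rw [h] at hki; exact lt_irrefl _ hki
    have hdisj : Disjoint (F (fun i => rk i S < rk i T)) (F (fun i => rk i S = rk i T)) := by
      rw [Finset.disjoint_left]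
      intro i hi1 hi2
      rw [hmemF] at hi1 hi2
      exact (ne_of_lt hi1) hi2
    have hcard : (F (fun i => rk i S < rk i T)).card + (F (fun i => rk i S = rk i T)).card
        ≤ k := by
      rw [← Finset.card_union_of_disjoint hdisj, ← hS]
      exact Finset.card_le_card hsub1
    have hsum : ((F (fun i => rk i S < rk i T)).card : ℝ)
        + (1/2) * ((F (fun i => rk i S = rk i T)).card : ℝ) ≤ (k : ℝ) := by
      have h1 : ((F (fun i => rk i S < rk i T)).card : ℝ)
          + ((F (fun i => rk i S = rk i T)).card : ℝ) ≤ (k : ℝ) := by exact_mod_cast hcard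
      have h2 : (0:ℝ) ≤ ((F (fun i => rk i S = rk i T)).card : ℝ) := Nat.cast_nonneg _
      linarith
    have hfin : ((F (fun i => rk i S < rk i T)).card : ℝ) / N
        + (1/2) * (((F (fun i => rk i S = rk i T)).card : ℝ) / N) ≤ (k : ℝ) / N := by
      calc ((F (fun i => rk i S < rk i T)).card : ℝ) / N
            + (1/2) * (((F (fun i => rk i S = rk i T)).card : ℝ) / N)
          = (((F (fun i => rk i S < rk i T)).card : ℝ)
            + (1/2) * ((F (fun i => rk i S = rk i T)).card : ℝ)) / N := by ring
        _ ≤ (k : ℝ) / N := by gcongr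
    exact hfin
  · -- part 2
    intro h
    have h1 := h x hxS
    have heq : 1 - ((N : ℝ) - k) / (k * N) = 1 - (1 - (k : ℝ) / N) / k := by
      field_simp
    linarith [h1.trans h3']
end
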